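/- arXiv:2502.11548 — 2 statements merged into one kernel-verified Lean document; each statement's English description precedes it below -/
import Mathlib

section
/- Let p be an odd prime and k an odd prime dividing |PSL_2(F_p)| = (p³−p)/2. Then every k-Sylow subgroup of PSL_2(F_p) is cyclic, and all cyclic subgroups of order k in PSL_2(F_p) are conjugate to each other. -/
/-- `PSL₂(𝔽ₚ)`, the quotient of `SL₂(𝔽ₚ)` by its center `{±I₂}`. -/
abbrev PSL (p : ℕ) :=
  Matrix.SpecialLinearGroup (Fin 2) (ZMod p) ⧸
    Subgroup.center (Matrix.SpecialLinearGroup (Fin 2) (ZMod p))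

/-!
Since `k` is odd, its full power `k ^ a` in `|PSL₂(𝔽ₚ)|`, a divisor of
`|SL₂(𝔽ₚ)| = p (p - 1) (p + 1)`, divides one of `p`, `p - 1`, `p + 1`, as any two of these have
`gcd ∣ 2`. Each of the three is the order of an element of `SL₂(𝔽ₚ)`: a transvection, `diag(u, u⁻¹)`
for a generator `u` of `𝔽ₚˣ`, and multiplication by `g ^ (p - 1)` on `𝔽_{p²}` for a generator `g`
of `𝔽_{p²}ˣ`. So `SL₂(𝔽ₚ)` has an element of order `k ^ a`, and its image in `PSL₂(𝔽ₚ)` keeps that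
odd order because the center `{±1}` has exponent `2`. It generates a Sylow `k`-subgroup, hence all
Sylow `k`-subgroups, being conjugate to it, are cyclic. Two subgroups of order `k` then lie in
conjugate Sylow subgroups, and a cyclic group has at most one subgroup of each order.
-/

open Matrix Subgroup

theorem QuotientGroup.orderOf_mk_eq_of_coprime {G : Type*} [Group G] {N : Subgroup G} [N.Normal]
    {n : ℕ} (hN : ∀ z ∈ N, z ^ n = 1) {y : G} (hy : (orderOf y).Coprime n) :
    orderOf (y : G ⧸ N) = orderOf y := by
  refine Nat.dvd_antisymm (orderOf_map_dvd (QuotientGroup.mk' N) y) ?_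
  have hmem : y ^ orderOf (y : G ⧸ N) ∈ N := by
    rw [← QuotientGroup.eq_one_iff, QuotientGroup.mk_pow, pow_orderOf_eq_one]
  refine hy.dvd_of_dvd_mul_right (orderOf_dvd_of_pow_eq_one ?_)
  rw [pow_mul, hN _ hmem]

theorem Subgroup.eq_of_card_eq_of_isCyclic {G : Type*} [Group G] [Finite G] [IsCyclic G]
    {H K : Subgroup G} (h : Nat.card H = Nat.card K) : H = K := by
  classical
  have : Fintype G := Fintype.ofFinite G
  suffices key : ∀ L : Subgroup G, Nat.card L = Nat.card K →
      (L : Set G) = {x | x ^ Nat.card K = 1} from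
    SetLike.ext' ((key H h).trans (key K rfl).symm)
  intro L hL
  have hsub : (L : Set G) ⊆ {x | x ^ Nat.card K = 1} := fun x hx => by
    have hx1 : (⟨x, hx⟩ : L) ^ Nat.card K = 1 := hL ▸ pow_card_eq_one'
    exact congrArg Subtype.val hx1
  refine Set.eq_of_subset_of_ncard_le hsub ?_
  rw [← Nat.card_coe_set_eq (L : Set G), SetLike.coe_sort_coe, hL, Set.ncard_eq_toFinset_card',
    Set.toFinset_ofPred]
  exact IsCyclic.card_pow_eq_one_le Nat.card_pos

theorem Subgroup.eq_of_card_eq_of_le_of_isCyclic {G : Type*} [Group G] [Finite G]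
    {Q H K : Subgroup G} [IsCyclic Q] (hH : H ≤ Q) (hK : K ≤ Q)
    (h : Nat.card H = Nat.card K) : H = K := by
  rw [← inf_eq_left.mpr hH, ← inf_eq_left.mpr hK, ← subgroupOf_inj]
  apply eq_of_card_eq_of_isCyclic
  rwa [Nat.card_congr (subgroupOfEquivOfLe hH).toEquiv,
    Nat.card_congr (subgroupOfEquivOfLe hK).toEquiv]

namespace Sylow

variable {G : Type*} [Group G] [Finite G] {k : ℕ} [Fact k.Prime]

theorem isCyclic_of_orderOf_eq {g : G} (hg : orderOf g = k ^ (Nat.card G).factorization k)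
    (P : Sylow k G) : IsCyclic P := by
  have hcard : Nat.card (zpowers g) = k ^ (Nat.card G).factorization k := by
    rw [Nat.card_zpowers, hg]
  obtain ⟨Q, hQ⟩ := (IsPGroup.of_card hcard).exists_le_sylow
  have hQg : zpowers g = Q := eq_of_le_of_card_ge hQ (by rw [Q.card_eq_multiplicity, hcard])
  have : IsCyclic Q := hQg ▸ isCyclic_zpowers g
  exact isCyclic_of_surjective _ (Sylow.equiv Q P).surjective

theorem exists_map_conj_eq_of_isCyclic (hcyc : ∀ P : Sylow k G, IsCyclic P)
    {H K : Subgroup G} (hH : IsPGroup k H) (hK : IsPGroup k K)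
    (h : Nat.card H = Nat.card K) : ∃ g : G, H.map (MulAut.conj g).toMonoidHom = K := by
  obtain ⟨P, hHP⟩ := hH.exists_le_sylow
  obtain ⟨Q, hKQ⟩ := hK.exists_le_sylow
  obtain ⟨g, rfl⟩ := MulAction.exists_smul_eq G P Q
  have : IsCyclic (g • P : Sylow k G) := hcyc _
  refine ⟨g, eq_of_card_eq_of_le_of_isCyclic ?_ hKQ ?_⟩
  · rw [coe_subgroup_smul, Subgroup.pointwise_smul_def]
    exact map_mono hHP
  · rwa [← Nat.card_congr (equivMapOfInjective H _ (MulAut.conj g).injective).toEquiv]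

end Sylow

theorem Nat.Prime.pow_dvd_or_pow_dvd_sub_one_or_pow_dvd_add_one {k n : ℕ} (hk : k.Prime)
    (hodd : Odd k) (a : ℕ) (h : k ^ a ∣ n * ((n - 1) * (n + 1))) :
    k ^ a ∣ n ∨ k ^ a ∣ n - 1 ∨ k ^ a ∣ n + 1 := by
  rcases Nat.eq_zero_or_pos n with rfl | hn
  · exact Or.inl (dvd_zero _)
  by_cases hkn : k ∣ n
  · refine Or.inl (hk.prime.pow_dvd_of_dvd_mul_right a (fun hd => hk.not_dvd_one ?_) h)
    rcases hk.dvd_mul.mp hd with hd | hd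
    · simpa [Nat.sub_sub_self hn] using Nat.dvd_sub hkn hd
    · exact (Nat.dvd_add_right hkn).mp hd
  refine Or.inr ?_
  replace h := hk.prime.pow_dvd_of_dvd_mul_left a hkn h
  by_cases hk1 : k ∣ n - 1
  · refine Or.inl (hk.prime.pow_dvd_of_dvd_mul_right a (fun hd => ?_) h)
    have h2 : k ∣ 2 := by simpa [show n + 1 - (n - 1) = 2 by omega] using Nat.dvd_sub hd hk1
    rw [(Nat.prime_dvd_prime_iff_eq hk Nat.prime_two).mp h2] at hodd
    exact (by decide : ¬Odd 2) hodd
  · exact Or.inr (hk.prime.pow_dvd_of_dvd_mul_left a hk1 h)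

namespace Matrix.SpecialLinearGroup

theorem pow_card_eq_one_of_mem_center {n R : Type*} [Fintype n] [DecidableEq n] [CommRing R]
    {A : SpecialLinearGroup n R} (hA : A ∈ center (SpecialLinearGroup n R)) :
    A ^ Fintype.card n = 1 := by
  obtain ⟨r, hr, hrA⟩ := mem_center_iff.mp hA
  ext1
  rw [coe_pow, ← hrA, ← map_pow, hr, map_one, coe_one]

theorem card_mul_card_sub_one {n F : Type*} [Fintype n] [DecidableEq n] [Nonempty n] [Field F]
    [Finite F] :
    Nat.card (SpecialLinearGroup n F) * (Nat.card F - 1) = Nat.card (GL n F) := by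
  have hrange : (toGL : SpecialLinearGroup n F →* GL n F).range = GeneralLinearGroup.det.ker := by
    ext A
    refine ⟨?_, fun hA => ⟨⟨A, congrArg Units.val hA⟩, Units.ext rfl⟩⟩
    rintro ⟨S, rfl⟩
    exact Units.ext S.2
  rw [← Subgroup.card_mul_index GeneralLinearGroup.det.ker, index_ker,
    MonoidHom.range_eq_top.mpr GeneralLinearGroup.det_surjective, card_top, Nat.card_units,
    ← hrange, Nat.card_congr (MonoidHom.ofInjective toGL_injective).toEquiv]

theorem orderOf_transvection {ι R : Type*} [Fintype ι] [DecidableEq ι] [CommRing R] {i j : ι}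
    (hij : i ≠ j) (c : R) : orderOf (transvection hij c) = addOrderOf c := by
  let f : Multiplicative R →* SpecialLinearGroup ι R :=
    { toFun := fun c => transvection hij c.toAdd
      map_one' := transvection_coeff_zero hij
      map_mul' := fun c d => Subtype.ext (transvection_mul_transvection_same i j hij _ _).symm }
  have hf : Function.Injective f := fun c d hcd => by
    have hij' := congrFun (congrFun (congrArg Subtype.val hcd) i) j
    change (transvection hij c.toAdd : Matrix ι ι R) i j = transvection hij d.toAdd i j at hij'
    simpa [transvection_coe, hij] using hij'
  rw [← orderOf_ofAdd_eq_addOrderOf, ← orderOf_injective f hf]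
  rfl

theorem orderOf_diag2 {F : Type*} [Field F] {a : F} (ha : a ≠ 0) :
    orderOf (diag2 a ha) = orderOf a := by
  refine orderOf_eq_orderOf_iff.mpr fun m => ?_
  rw [SpecialLinearGroup.ext_iff]
  simp [diag2_coe, diagonal_pow, ← diagonal_one, Fin.forall_fin_two]

section ZMod

variable (p : ℕ) [Fact p.Prime]

theorem card_fin_two_zmod :
    Nat.card (SpecialLinearGroup (Fin 2) (ZMod p)) = p * ((p - 1) * (p + 1)) := by
  have hp := (Fact.out : p.Prime).two_le
  have h := card_mul_card_sub_one (n := Fin 2) (F := ZMod p)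
  rw [card_GL_field, ZMod.card, Fin.prod_univ_two, Nat.card_zmod] at h
  refine Nat.eq_of_mul_eq_mul_right (by omega : 0 < p - 1) (h.trans ?_)
  simp only [Fin.val_zero, Fin.val_one, pow_zero, pow_one]
  zify [Nat.one_le_pow 2 p (by omega), (by omega : 1 ≤ p), Nat.le_self_pow two_ne_zero p]
  ring

theorem exists_orderOf_eq_self : ∃ x : SpecialLinearGroup (Fin 2) (ZMod p), orderOf x = p :=
  ⟨transvection zero_ne_one 1, by rw [orderOf_transvection, ZMod.addOrderOf_one]⟩

theorem exists_orderOf_eq_sub_one :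
    ∃ x : SpecialLinearGroup (Fin 2) (ZMod p), orderOf x = p - 1 := by
  obtain ⟨g, hg⟩ := IsCyclic.exists_ofOrder_eq_natCard (α := (ZMod p)ˣ)
  refine ⟨diag2 (g : ZMod p) g.ne_zero, ?_⟩
  rw [orderOf_diag2, orderOf_units, hg, Nat.card_units, Nat.card_zmod]

theorem exists_orderOf_eq_add_one :
    ∃ x : SpecialLinearGroup (Fin 2) (ZMod p), orderOf x = p + 1 := by
  have hp := (Fact.out : p.Prime).two_le
  let F := GaloisField p 2
  let b : Module.Basis (Fin 2) (ZMod p) F :=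
    Module.finBasisOfFinrankEq (ZMod p) F (GaloisField.finrank p two_ne_zero)
  let φ : F →* Matrix (Fin 2) (Fin 2) (ZMod p) := (Algebra.leftMulMatrix b).toMonoidHom
  have hφ : Function.Injective φ := (Algebra.leftMulMatrix b).toRingHom.injective
  obtain ⟨g, hg⟩ := IsCyclic.exists_ofOrder_eq_natCard (α := Fˣ)
  have hcard : Nat.card Fˣ = (p - 1) * (p + 1) := by
    rw [Nat.card_units, GaloisField.card p 2 two_ne_zero]
    zify [Nat.one_le_pow 2 p (by omega), (by omega : 1 ≤ p)]
    ring
  -- `det (φ g)` is a unit of `𝔽ₚ`, so by Fermat its `(p - 1)`-st power is `1`.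
  have hdet : (φ ↑(g ^ (p - 1))).det = 1 := by
    have := congrArg Units.val
      (ZMod.units_pow_card_sub_one_eq_one p (GeneralLinearGroup.det (Units.map φ g)))
    simpa [map_pow] using this
  refine ⟨⟨_, hdet⟩, (orderOf_injective coeMonoidHom coeMonoidHom_injective _).symm.trans ?_⟩
  change orderOf (φ ↑(g ^ (p - 1))) = p + 1
  rw [orderOf_injective φ hφ, orderOf_units,
    orderOf_pow_of_dvd (by omega) (hg ▸ hcard ▸ dvd_mul_right _ _), hg, hcard,
    Nat.mul_div_cancel_left _ (by omega)]

theorem exists_orderOf_eq_prime_pow {k : ℕ} (hk : k.Prime) (hodd : Odd k) {a : ℕ}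
    (h : k ^ a ∣ Nat.card (SpecialLinearGroup (Fin 2) (ZMod p))) :
    ∃ x : SpecialLinearGroup (Fin 2) (ZMod p), orderOf x = k ^ a := by
  have of_dvd_orderOf {x : SpecialLinearGroup (Fin 2) (ZMod p)} (hx : k ^ a ∣ orderOf x) :
      ∃ y : SpecialLinearGroup (Fin 2) (ZMod p), orderOf y = k ^ a :=
    ⟨_, orderOf_pow_orderOf_div (orderOf_pos x).ne' hx⟩
  rw [card_fin_two_zmod] at h
  rcases hk.pow_dvd_or_pow_dvd_sub_one_or_pow_dvd_add_one hodd a h with h | h | h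
  · obtain ⟨x, hx⟩ := exists_orderOf_eq_self p
    exact of_dvd_orderOf (hx ▸ h)
  · obtain ⟨x, hx⟩ := exists_orderOf_eq_sub_one p
    exact of_dvd_orderOf (hx ▸ h)
  · obtain ⟨x, hx⟩ := exists_orderOf_eq_add_one p
    exact of_dvd_orderOf (hx ▸ h)

end ZMod

end Matrix.SpecialLinearGroup

theorem stmt11_general (p k : ℕ) [Fact p.Prime] [Fact k.Prime] (hk : Odd k) :
    (∀ P : Sylow k (PSL p), IsCyclic ↥(P : Subgroup (PSL p))) ∧
      ∀ H K : Subgroup (PSL p), Nat.card H = k → Nat.card K = k →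
        ∃ g : PSL p, Subgroup.map (MulAut.conj g).toMonoidHom H = K := by
  obtain ⟨y, hy⟩ := SpecialLinearGroup.exists_orderOf_eq_prime_pow p Fact.out hk
    ((Nat.ordProj_dvd (Nat.card (PSL p)) k).trans (card_quotient_dvd_card _))
  have hcoprime : (orderOf y).Coprime (Fintype.card (Fin 2)) := by
    rw [hy, Fintype.card_fin]
    exact hk.pow.coprime_two_right
  have hcyc := Sylow.isCyclic_of_orderOf_eq <|
    (QuotientGroup.orderOf_mk_eq_of_coprime
      (fun _ => SpecialLinearGroup.pow_card_eq_one_of_mem_center) hcoprime).trans hy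
  have of_card_eq_k {H : Subgroup (PSL p)} (hH : Nat.card H = k) : IsPGroup k H :=
    .of_card (n := 1) (by rw [hH, pow_one])
  exact ⟨hcyc, fun H K hH hK => Sylow.exists_map_conj_eq_of_isCyclic hcyc
    (of_card_eq_k hH) (of_card_eq_k hK) (hH.trans hK.symm)⟩

theorem stmt11 (p k : ℕ) [Fact p.Prime] [Fact k.Prime] (hp : Odd p) (hk : Odd k)
    (hdvd : k ∣ Nat.card (PSL p)) :
    (∀ P : Sylow k (PSL p), IsCyclic ↥(P : Subgroup (PSL p))) ∧
      ∀ H K : Subgroup (PSL p), Nat.card H = k → Nat.card K = k →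
        ∃ g : PSL p, Subgroup.map (MulAut.conj g).toMonoidHom H = K :=
  stmt11_general p k hk
end

section
/- Let p be an odd prime. The number of subgroups of order p in PSL_2(F_p) is p + 1. -/
open Matrix Subgroup

namespace Nat

theorem eq_add_one_of_modEq_one_of_dvd_sq_sub_one {p n : ℕ} (hp : 1 < p)
    (hn : n ≡ 1 [MOD p]) (hdvd : n ∣ p ^ 2 - 1) (hn1 : n ≠ 1) : n = p + 1 := by
  obtain ⟨q, rfl⟩ : ∃ q, p = q + 1 := ⟨p - 1, by omega⟩
  obtain ⟨d, hd⟩ := hdvd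
  replace hd : (q + 2) * q = n * d := hd ▸ Nat.eq_sub_of_add_eq (by ring)
  have hd1 : q + 1 ∣ d + 1 := by
    refine Nat.modEq_zero_iff_dvd.1 ?_
    calc d + 1 = 1 * d + 1 := by rw [one_mul]
      _ ≡ n * d + 1 [MOD q + 1] := (hn.symm.mul_right d).add_right 1
      _ = (q + 1) * (q + 1) := by rw [← hd]; ring
      _ ≡ 0 [MOD q + 1] := Nat.modEq_zero_iff_dvd.2 (dvd_mul_right _ _)
  have hle : n ≤ q + 2 := by
    have hqd : q ≤ d := by have := Nat.le_of_dvd d.succ_pos hd1; omega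
    refine Nat.le_of_mul_le_mul_right ?_ (show 0 < q by omega)
    calc n * q ≤ n * d := Nat.mul_le_mul_left n hqd
      _ = (q + 2) * q := hd.symm
  have hn0 : n ≠ 0 := by
    rintro rfl
    rw [zero_mul, Nat.mul_eq_zero] at hd
    omega
  have hge : q + 1 ≤ n - 1 :=
    Nat.le_of_dvd (by omega) ((Nat.modEq_iff_dvd' (by omega)).1 hn.symm)
  omega

theorem not_dvd_sq_sub_one {p : ℕ} (hp : 1 < p) : ¬ p ∣ p ^ 2 - 1 := by
  intro h
  have h1 := Nat.dvd_sub (dvd_pow_self p two_ne_zero) h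
  rw [Nat.sub_sub_self (Nat.one_le_pow _ _ (by omega))] at h1
  exact hp.ne' (Nat.dvd_one.1 h1)

theorem factorization_eq_one_of_dvd_mul {n p m : ℕ} (hp : p.Prime) (hpn : p ∣ n)
    (hn : n ∣ p * m) (hpm : ¬ p ∣ m) : n.factorization p = 1 := by
  have hm : m ≠ 0 := by rintro rfl; exact hpm (dvd_zero p)
  have hpm0 : p * m ≠ 0 := mul_ne_zero hp.ne_zero hm
  have hn0 : n ≠ 0 := ne_zero_of_dvd_ne_zero hpm0 hn
  refine le_antisymm ?_ (hp.factorization_pos_of_dvd hn0 hpn)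
  calc n.factorization p ≤ (p * m).factorization p :=
        (Nat.factorization_le_iff_dvd hn0 hpm0).2 hn p
    _ = 1 := by
      rw [Nat.factorization_mul hp.ne_zero hm, Finsupp.add_apply, hp.factorization_self,
        Nat.factorization_eq_zero_of_not_dvd hpm]

end Nat

namespace Sylow

variable {G : Type*} [Group G] [Finite G] {p : ℕ} [Fact p.Prime]

def equivSubgroupCardEq {n : ℕ} (hn : (Nat.card G).factorization p = n) :
    Sylow p G ≃ {H : Subgroup G // Nat.card H = p ^ n} where
  toFun P := ⟨P, hn ▸ P.card_eq_multiplicity⟩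
  invFun H := ofCard H.1 (hn ▸ H.2)
  left_inv _ := rfl
  right_inv _ := rfl

theorem card_dvd_of_card_dvd_mul {m : ℕ} (hn : (Nat.card G).factorization p = 1)
    (hm : Nat.card G ∣ p * m) : Nat.card (Sylow p G) ∣ m := by
  obtain ⟨P⟩ : Nonempty (Sylow p G) := inferInstance
  have hP : Nat.card P = p := by rw [P.card_eq_multiplicity, hn, pow_one]
  have hG := card_mul_index (P : Subgroup G)
  rw [← hG, hP] at hm
  exact P.card_dvd_index.trans (Nat.dvd_of_mul_dvd_mul_left (Fact.out : p.Prime).pos hm)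

end Sylow

namespace Matrix.SpecialLinearGroup

variable {n R : Type*} [Fintype n] [DecidableEq n] [CommRing R]

theorem toGL_range :
    (toGL : SpecialLinearGroup n R →* GL n R).range = GeneralLinearGroup.det.ker :=
  SetLike.coe_injective <| by rw [MonoidHom.coe_range, range_toGL]; rfl

theorem card_mul_card_units [Finite R] [Nonempty n] :
    Nat.card (SpecialLinearGroup n R) * Nat.card Rˣ = Nat.card (GL n R) := by
  rw [← card_mul_index GeneralLinearGroup.det.ker, index_ker,
    MonoidHom.range_eq_top.2 GeneralLinearGroup.det_surjective, card_top, ← toGL_range,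
    Nat.card_congr (MonoidHom.ofInjective toGL_injective).toEquiv]

theorem card_fin_two {F : Type*} [Field F] [Fintype F] :
    Nat.card (SpecialLinearGroup (Fin 2) F) = Fintype.card F * (Fintype.card F ^ 2 - 1) := by
  have h := card_mul_card_units (n := Fin 2) (R := F)
  have hq := Fintype.one_lt_card (α := F)
  rw [card_GL_field, Fin.prod_univ_two, Nat.card_units, Nat.card_eq_fintype_card (α := F)] at h
  refine Nat.eq_of_mul_eq_mul_right (show 0 < Fintype.card F - 1 by omega) (h.trans ?_)
  simp only [Fin.val_zero, Fin.val_one, pow_zero, pow_one]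
  rw [sq, ← Nat.mul_sub_one]
  ring

theorem eq_zero_of_transvection_mul_transvection_mem_center {i j : n} (hij : i ≠ j) (a b : R)
    (h : transvection hij a * transvection hij.symm b ∈ center (SpecialLinearGroup n R)) :
    b = 0 := by
  obtain ⟨r, -, hr⟩ := mem_center_iff.1 h
  simpa [transvection_coe, hij, hij.symm, mul_add, add_mul] using congr($hr j i).symm

end Matrix.SpecialLinearGroup

namespace Matrix.ProjectiveSpecialLinearGroup

variable {n R : Type*} [Fintype n] [DecidableEq n] [CommRing R] {i j : n}

def transvectionHom (hij : i ≠ j) : Multiplicative R →* ProjectiveSpecialLinearGroup n R where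
  toFun b := SpecialLinearGroup.transvection hij b.toAdd
  map_one' := by simp
  map_mul' a b := by simp [SpecialLinearGroup.transvection_add]

theorem transvectionHom_injective (hij : i ≠ j) :
    Function.Injective (transvectionHom (R := R) hij) := by
  refine (injective_iff_map_eq_one _).2 fun b hb => ?_
  rw [transvectionHom, MonoidHom.coe_mk, OneHom.coe_mk, QuotientGroup.eq_one_iff] at hb
  exact toAdd_eq_zero.1 ((SpecialLinearGroup.transvection_mem_center_iff hij _).1 hb)

def transvectionSubgroup (hij : i ≠ j) : Subgroup (ProjectiveSpecialLinearGroup n R) :=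
  (transvectionHom hij).range

theorem card_transvectionSubgroup [Finite R] (hij : i ≠ j) :
    Nat.card (transvectionSubgroup (R := R) hij) = Nat.card R :=
  (Nat.card_congr (MonoidHom.ofInjective (transvectionHom_injective hij)).toEquiv).symm

theorem transvectionSubgroup_ne_symm [Nontrivial R] (hij : i ≠ j) :
    transvectionSubgroup (R := R) hij ≠ transvectionSubgroup hij.symm := by
  intro h
  obtain ⟨b, hb⟩ : transvectionHom (R := R) hij.symm (.ofAdd 1) ∈ transvectionSubgroup hij :=
    h ▸ ⟨_, rfl⟩
  simp only [transvectionHom, MonoidHom.coe_mk, OneHom.coe_mk] at hb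
  rw [QuotientGroup.eq, SpecialLinearGroup.transvection_inv] at hb
  exact one_ne_zero
    (SpecialLinearGroup.eq_zero_of_transvection_mul_transvection_mem_center hij _ _ hb)

end Matrix.ProjectiveSpecialLinearGroup

open Matrix.SpecialLinearGroup Matrix.ProjectiveSpecialLinearGroup

theorem stmt14_general (p : ℕ) [Fact p.Prime] :
    Nat.card {H : Subgroup (PSL p) // Nat.card H = p} = p + 1 := by
  have hp : p.Prime := Fact.out
  have hcard {i j : Fin 2} (hij : i ≠ j) :
      Nat.card (transvectionSubgroup (R := ZMod p) hij) = p := by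
    rw [card_transvectionSubgroup, Nat.card_zmod]
  have hdvd : Nat.card (PSL p) ∣ p * (p ^ 2 - 1) := by
    have := card_quotient_dvd_card (center (SpecialLinearGroup (Fin 2) (ZMod p)))
    rwa [card_fin_two, ZMod.card] at this
  have hpdvd := card_subgroup_dvd_card (transvectionSubgroup (R := ZMod p) (zero_ne_one' (Fin 2)))
  rw [hcard] at hpdvd
  have hfact := Nat.factorization_eq_one_of_dvd_mul hp hpdvd hdvd (Nat.not_dvd_sq_sub_one hp.one_lt)
  have hsylow :
      Nat.card (Sylow p (PSL p)) = Nat.card {H : Subgroup (PSL p) // Nat.card H = p} := by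
    simpa only [pow_one] using Nat.card_congr (Sylow.equivSubgroupCardEq hfact)
  have hne : 1 < Nat.card {H : Subgroup (PSL p) // Nat.card H = p} :=
    Finite.one_lt_card_iff_nontrivial.2 <|
      nontrivial_of_ne ⟨_, hcard zero_ne_one⟩ ⟨_, hcard one_ne_zero⟩ fun h =>
        transvectionSubgroup_ne_symm zero_ne_one (congr_arg Subtype.val h)
  rw [← hsylow] at hne ⊢
  exact Nat.eq_add_one_of_modEq_one_of_dvd_sq_sub_one hp.one_lt (card_sylow_modEq_one p _)
    (Sylow.card_dvd_of_card_dvd_mul hfact hdvd) hne.ne'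

theorem stmt14 (p : ℕ) [Fact p.Prime] (hp : Odd p) :
    Nat.card {H : Subgroup (PSL p) // Nat.card H = p} = p + 1 :=
  stmt14_general p
end
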